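/- arXiv:2209.14381 — 2 statements merged into one kernel-verified Lean document; each statement's English description precedes it below -/
import Mathlib

section
/- Let E be a Riesz space and let p, q : ℕ → ℕ satisfy the deferred property. If x_n ↓^{D_{st_o}}_{p,q} 0 and y_n ↓^{D_{st_o}}_{p,q} 0, then (x_n + y_n) ↓^{D_{st_o}}_{p,q} 0. -/
open Filter Topology

variable {E : Type*} [AddCommGroup E] [Lattice E]
  [CovariantClass E E (· + ·) (· ≤ ·)] [Module ℝ E] [PosSMulMono ℝ E]

/-- `p` and `q` satisfy the deferred property: `p n < q n` for all `n` and `q n → ∞`. -/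
def DeferredProperty (p q : ℕ → ℕ) : Prop :=
  (∀ n, p n < q n) ∧ Tendsto q atTop atTop

open Classical in
/-- The ratio `|{k ∈ K : p n < k ≤ q n}| / (q n - p n)`. -/
noncomputable def deferredRatio (p q : ℕ → ℕ) (K : Set ℕ) (n : ℕ) : ℝ :=
  (((Finset.Ioc (p n) (q n)).filter (fun k => k ∈ K)).card : ℝ) / ((q n : ℝ) - (p n : ℝ))

/-- The deferred density of `K ⊆ ℕ` is `a`. -/
def DeferredDensity (p q : ℕ → ℕ) (K : Set ℕ) (a : ℝ) : Prop :=
  Tendsto (deferredRatio p q K) atTop (nhds a)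

/-- `z` is deferred statistical order decreasing to `0`: there is an (infinite) set
`K = {k₁ < k₂ < ⋯}` of deferred density one along which `z` is decreasing with infimum `0`. -/
def DStatDecreasing (p q : ℕ → ℕ) (z : ℕ → E) : Prop :=
  ∃ K : Set ℕ, K.Infinite ∧ DeferredDensity p q K 1 ∧
    (∀ i ∈ K, ∀ j ∈ K, i ≤ j → z j ≤ z i) ∧ IsGLB (z '' K) 0

/-- `x` is deferred statistical order convergent to `l`. -/
def DStatOrderConv (p q : ℕ → ℕ) (x : ℕ → E) (l : E) : Prop :=
  ∃ z : ℕ → E, DStatDecreasing p q z ∧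
    ∃ K : Set ℕ, K.Infinite ∧ DeferredDensity p q K 1 ∧ ∀ k ∈ K, |x k - l| ≤ z k

/-! Intersect the two index sets of density one. The deferred ratio of `A ∩ B` is squeezed
between `r_A + r_B - 1` and `r_A`, so the intersection again has density one; as `q n → ∞`, a
set of density one is infinite, hence cofinal in `ℕ`, and both sequences keep infimum `0` along
it. Along a common index set on which both sequences decrease, the infimum of the sum is the sum
of the infima. -/

section GreatestLowerBound

variable {ι α : Type*}

lemma IsGLB.image_of_cofinal [Preorder ι] [Preorder α] {x : ι → α} {K K' : Set ι} {a : α}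
    (h : IsGLB (x '' K) a) (hx : AntitoneOn x K) (hK' : K' ⊆ K)
    (hcof : ∀ i ∈ K, ∃ j ∈ K', i ≤ j) : IsGLB (x '' K') a := by
  refine ⟨lowerBounds_mono_set (Set.image_mono hK') h.1, fun b hb => h.2 ?_⟩
  rintro _ ⟨i, hi, rfl⟩
  obtain ⟨j, hj, hij⟩ := hcof i hi
  exact (hb ⟨j, hj, rfl⟩).trans (hx hi (hK' hj) hij)

lemma IsGLB.add_of_antitoneOn [LinearOrder ι] [AddCommGroup α] [PartialOrder α] [AddLeftMono α]
    {x y : ι → α} {K : Set ι} {a b : α} (ha : IsGLB (x '' K) a) (hb : IsGLB (y '' K) b)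
    (hx : AntitoneOn x K) (hy : AntitoneOn y K) :
    IsGLB ((fun n => x n + y n) '' K) (a + b) := by
  refine ⟨?_, fun c hc => ?_⟩
  · rintro _ ⟨i, hi, rfl⟩
    exact add_le_add (ha.1 ⟨i, hi, rfl⟩) (hb.1 ⟨i, hi, rfl⟩)
  -- compare both `x i + y j` with `x k + y k` at `k = max i j`
  have hsplit : ∀ i ∈ K, ∀ j ∈ K, c ≤ x i + y j := by
    intro i hi j hj
    rcases le_total i j with hij | hji
    · exact (hc ⟨j, hj, rfl⟩).trans (add_le_add (hx hi hj hij) le_rfl)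
    · exact (hc ⟨i, hi, rfl⟩).trans (add_le_add le_rfl (hy hj hi hji))
  have hlower : c - a ∈ lowerBounds (y '' K) := by
    rintro _ ⟨j, hj, rfl⟩
    refine sub_le_comm.1 (ha.2 ?_)
    rintro _ ⟨i, hi, rfl⟩
    exact sub_le_iff_le_add.2 (hsplit i hi j hj)
  exact sub_le_iff_le_add'.1 (hb.2 hlower)

end GreatestLowerBound

lemma Finset.card_filter_add_card_filter_le {α : Type*} (s : Finset α) {P Q R : α → Prop}
    [DecidablePred P] [DecidablePred Q] [DecidablePred R] (hR : ∀ a ∈ s, P a → Q a → R a) :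
    (s.filter P).card + (s.filter Q).card ≤ (s.filter R).card + s.card := by
  classical
  rw [← Finset.card_union_add_card_inter, add_comm]
  refine add_le_add (Finset.card_le_card fun a ha => ?_) (Finset.card_le_card ?_)
  · simp only [Finset.mem_inter, Finset.mem_filter] at ha ⊢
    exact ⟨ha.1.1, hR a ha.1.1 ha.1.2 ha.2.2⟩
  · exact Finset.union_subset (Finset.filter_subset _ _) (Finset.filter_subset _ _)

section DeferredDensity

variable {p q : ℕ → ℕ} {n : ℕ}

lemma deferredRatio_nonneg (h : p n ≤ q n) (K : Set ℕ) : 0 ≤ deferredRatio p q K n :=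
  div_nonneg (Nat.cast_nonneg _) (sub_nonneg.2 (Nat.cast_le.2 h))

open Classical in
lemma deferredRatio_mono (h : p n ≤ q n) {A B : Set ℕ} (hAB : A ⊆ B) :
    deferredRatio p q A n ≤ deferredRatio p q B n :=
  div_le_div_of_nonneg_right
    (Nat.cast_le.2 (Finset.card_le_card (Finset.monotone_filter_right _ fun _ _ hk => hAB hk)))
    (sub_nonneg.2 (Nat.cast_le.2 h))

open Classical in
lemma deferredRatio_add_le_inter (h : p n ≤ q n) (A B : Set ℕ) :
    deferredRatio p q A n + deferredRatio p q B n ≤ deferredRatio p q (A ∩ B) n + 1 := by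
  have hd : 0 ≤ (q n : ℝ) - p n := sub_nonneg.2 (Nat.cast_le.2 h)
  have hS : ((Finset.Ioc (p n) (q n)).card : ℝ) / ((q n : ℝ) - p n) ≤ 1 := by
    rw [Nat.card_Ioc, Nat.cast_sub h]
    exact div_self_le_one _
  calc deferredRatio p q A n + deferredRatio p q B n
      ≤ deferredRatio p q (A ∩ B) n +
          ((Finset.Ioc (p n) (q n)).card : ℝ) / ((q n : ℝ) - p n) := by
        rw [deferredRatio, deferredRatio, deferredRatio, ← add_div, ← add_div]
        refine div_le_div_of_nonneg_right ?_ hd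
        norm_cast
        convert Finset.card_filter_add_card_filter_le _ fun _ _ hA hB => Set.mem_inter hA hB
    _ ≤ deferredRatio p q (A ∩ B) n + 1 := add_le_add le_rfl hS

lemma DeferredDensity.inter (hpq : ∀ n, p n ≤ q n) {A B : Set ℕ}
    (hA : DeferredDensity p q A 1) (hB : DeferredDensity p q B 1) :
    DeferredDensity p q (A ∩ B) 1 := by
  have hlow : Tendsto (fun n => deferredRatio p q A n + deferredRatio p q B n - 1)
      atTop (𝓝 1) := by
    simpa using (hA.add hB).sub_const 1
  exact tendsto_of_tendsto_of_tendsto_of_le_of_le hlow hA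
    (fun n => sub_le_iff_le_add.2 (deferredRatio_add_le_inter (hpq n) A B))
    (fun n => deferredRatio_mono (hpq n) Set.inter_subset_left)

lemma deferredRatio_Iic_le (h : p n < q n) {M : ℕ} (hM : M ≤ q n) :
    deferredRatio p q (Set.Iic M) n ≤ M / q n := by
  have hd : (0 : ℝ) < (q n : ℝ) - p n := sub_pos.2 (Nat.cast_lt.2 h)
  have hq : (0 : ℝ) < q n := Nat.cast_pos.2 (Nat.zero_lt_of_lt h)
  calc deferredRatio p q (Set.Iic M) n ≤ ((M - p n : ℕ) : ℝ) / ((q n : ℝ) - p n) := by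
        refine div_le_div_of_nonneg_right (Nat.cast_le.2 ?_) hd.le
        calc _ ≤ (Finset.Ioc (p n) M).card := Finset.card_le_card fun k hk => by
                simp only [Finset.mem_filter, Finset.mem_Ioc, Set.mem_Iic] at hk ⊢
                omega
          _ = M - p n := Nat.card_Ioc _ _
    _ ≤ M / q n := by
      rcases le_total M (p n) with hMp | hpM
      · rw [Nat.sub_eq_zero_of_le hMp, Nat.cast_zero, zero_div]
        positivity
      · have hM' : (M : ℝ) ≤ q n := Nat.cast_le.2 hM
        rw [Nat.cast_sub hpM, div_le_div_iff₀ hd hq]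
        nlinarith [(Nat.cast_nonneg (p n) : (0 : ℝ) ≤ p n)]

lemma tendsto_deferredRatio_Iic (hpq : DeferredProperty p q) (M : ℕ) :
    Tendsto (deferredRatio p q (Set.Iic M)) atTop (𝓝 0) :=
  squeeze_zero' (Eventually.of_forall fun n => deferredRatio_nonneg (hpq.1 n).le _)
    ((hpq.2.eventually_ge_atTop M).mono fun n hn => deferredRatio_Iic_le (hpq.1 n) hn)
    (tendsto_const_nhds.div_atTop (tendsto_natCast_atTop_atTop.comp hpq.2))

lemma DeferredDensity.infinite (hpq : DeferredProperty p q) {K : Set ℕ}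
    (hK : DeferredDensity p q K 1) : K.Infinite := by
  intro hfin
  obtain ⟨M, hM⟩ := hfin.bddAbove
  have hzero : DeferredDensity p q K 0 :=
    squeeze_zero (fun n => deferredRatio_nonneg (hpq.1 n).le K)
      (fun n => deferredRatio_mono (hpq.1 n).le fun _ hk => hM hk)
      (tendsto_deferredRatio_Iic hpq M)
  exact one_ne_zero (tendsto_nhds_unique hK hzero)

end DeferredDensity

theorem stmt1 (p q : ℕ → ℕ) (hpq : DeferredProperty p q) (x y : ℕ → E)
    (hx : DStatDecreasing p q x) (hy : DStatDecreasing p q y) :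
    DStatDecreasing p q (fun n => x n + y n) := by
  obtain ⟨K₁, -, hK₁, hx_anti : AntitoneOn x K₁, hx_glb⟩ := hx
  obtain ⟨K₂, -, hK₂, hy_anti : AntitoneOn y K₂, hy_glb⟩ := hy
  set K := K₁ ∩ K₂
  have hK : DeferredDensity p q K 1 := hK₁.inter (fun n => (hpq.1 n).le) hK₂
  have hK_inf : K.Infinite := hK.infinite hpq
  have hcof : ∀ i, ∃ j ∈ K, i ≤ j := fun i =>
    (hK_inf.exists_gt i).imp fun _ hj => ⟨hj.1, hj.2.le⟩
  have hx_anti' : AntitoneOn x K := hx_anti.mono Set.inter_subset_left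
  have hy_anti' : AntitoneOn y K := hy_anti.mono Set.inter_subset_right
  have hx_glb' := hx_glb.image_of_cofinal hx_anti Set.inter_subset_left fun i _ => hcof i
  have hy_glb' := hy_glb.image_of_cofinal hy_anti Set.inter_subset_right fun i _ => hcof i
  refine ⟨K, hK_inf, hK, fun i hi j hj hij => ?_, ?_⟩
  · exact add_le_add (hx_anti' hi hj hij) (hy_anti' hi hj hij)
  · simpa only [add_zero] using hx_glb'.add_of_antitoneOn hy_glb' hx_anti' hy_anti'
end

section
/- Let E be a Riesz space and let p, q : ℕ → ℕ satisfy the deferred property. If (x_n) is a decreasing sequence in E (x_1 ≥ x_2 ≥ ⋯) and x_n →^{D_{st_o}}_{p,q} x, then x_n ↓ x, i.e., inf_{n∈ℕ} x_n = x; in particular (x_n) order converges to x. -/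
open Filter Topology

variable {E : Type*} [AddCommGroup E] [Lattice E]
  [CovariantClass E E (· + ·) (· ≤ ·)] [Module ℝ E] [PosSMulMono ℝ E]

/-- `x` order converges to `l`. -/
def OrderConv (x : ℕ → E) (l : E) : Prop :=
  ∃ y : ℕ → E, (∀ m n, m ≤ n → y n ≤ y m) ∧ IsGLB (Set.range y) 0 ∧ ∀ n, |x n - l| ≤ y n

/-!
Two sets of deferred density one meet in a set of deferred density one, and such a set is
infinite because a set bounded by `M` has deferred ratio at most `M / q n → 0`. Along this
infinite set `J` we have `|x j - a| ≤ z j`, with `z` decreasing to `0` on `K ⊇ J`. As `x` is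
decreasing, both `a - x n` and `b - a` (for a lower bound `b` of `x`) lie below `z j` for
infinitely many `j ∈ K`, hence below every `z k` with `k ∈ K`, hence below `0`. Thus
`a = inf x`, and `y n = x n - a` witnesses order convergence.
-/

section DeferredRatio

variable {p q : ℕ → ℕ} {n : ℕ}

open Classical in
lemma deferredRatio_le_one (h : p n < q n) (K : Set ℕ) : deferredRatio p q K n ≤ 1 := by
  have hd : (0 : ℝ) < q n - p n := sub_pos.2 (by exact_mod_cast h)
  rw [deferredRatio, div_le_one hd, ← Nat.cast_sub h.le, ← Nat.card_Ioc]
  exact_mod_cast Finset.card_filter_le _ _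

open Classical in
lemma deferredRatio_add_deferredRatio_le (h : p n < q n) (K K' : Set ℕ) :
    deferredRatio p q K n + deferredRatio p q K' n ≤ 1 + deferredRatio p q (K ∩ K') n := by
  have hd : (0 : ℝ) < q n - p n := sub_pos.2 (by exact_mod_cast h)
  rw [deferredRatio, deferredRatio, deferredRatio, ← add_div, one_add_div hd.ne']
  refine div_le_div_of_nonneg_right ?_ hd.le
  rw [← Nat.cast_sub h.le, ← Nat.card_Ioc]
  set s := Finset.Ioc (p n) (q n)
  have hinter : s.filter (· ∈ K) ∩ s.filter (· ∈ K') = s.filter (· ∈ K ∩ K') := by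
    ext k; simp [and_assoc, and_left_comm]
  have hunion : s.filter (· ∈ K) ∪ s.filter (· ∈ K') ⊆ s :=
    Finset.union_subset (Finset.filter_subset _ _) (Finset.filter_subset _ _)
  have := Finset.card_union_add_card_inter (s.filter (· ∈ K)) (s.filter (· ∈ K'))
  rw [hinter] at this
  norm_cast
  -- `convert` reconciles the classical `Decidable` instance inside `deferredRatio p q (K ∩ K')`
  convert this ▸ Nat.add_le_add_right (Finset.card_le_card hunion) _

open Classical in
lemma deferredRatio_le_div_of_mem_upperBounds {K : Set ℕ} {M : ℕ} (hM : M ∈ upperBounds K)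
    (h : p n < q n) : deferredRatio p q K n ≤ M / q n := by
  have hd : (0 : ℝ) < q n - p n := sub_pos.2 (by exact_mod_cast h)
  have hsub : (Finset.Ioc (p n) (q n)).filter (· ∈ K) ⊆ Finset.Ioc (p n) M := fun k hk => by
    rw [Finset.mem_filter, Finset.mem_Ioc] at hk
    exact Finset.mem_Ioc.2 ⟨hk.1.1, hM hk.2⟩
  have hcM := Finset.card_le_card hsub
  have hcq := Finset.card_le_card (Finset.filter_subset (· ∈ K) (Finset.Ioc (p n) (q n)))
  rw [Nat.card_Ioc] at hcM hcq
  rw [deferredRatio, div_le_div_iff₀ hd (by exact_mod_cast (Nat.zero_le _).trans_lt h)]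
  generalize ((Finset.Ioc (p n) (q n)).filter (· ∈ K)).card = c at hcM hcq ⊢
  rcases Nat.eq_zero_or_pos c with rfl | hc
  · simp only [Nat.cast_zero, zero_mul]
    exact mul_nonneg (Nat.cast_nonneg _) hd.le
  · have hcM' : (c : ℝ) + p n ≤ M := by exact_mod_cast (by omega : c + p n ≤ M)
    have hcq' : (c : ℝ) + p n ≤ q n := by exact_mod_cast (by omega : c + p n ≤ q n)
    have hp : (0 : ℝ) ≤ p n := Nat.cast_nonneg _
    -- `M (q - p) - c q ≥ (c + p) (q - p) - c q = p (q - p - c) ≥ 0`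
    nlinarith [mul_nonneg (sub_nonneg.2 hcM') hd.le, mul_nonneg hp (sub_nonneg.2 hcq')]

end DeferredRatio

namespace DeferredDensity

variable {p q : ℕ → ℕ} {K K' : Set ℕ}

lemma infinite_s12 (hpq : DeferredProperty p q) (hK : DeferredDensity p q K 1) : K.Infinite := by
  intro hfin
  obtain ⟨M, hM⟩ := hfin.bddAbove
  have hbound (n : ℕ) : deferredRatio p q K n ≤ M / q n :=
    deferredRatio_le_div_of_mem_upperBounds hM (hpq.1 n)
  have hzero : Tendsto (fun n => (M : ℝ) / q n) atTop (𝓝 0) :=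
    tendsto_const_nhds.div_atTop (tendsto_natCast_atTop_atTop.comp hpq.2)
  have := le_of_tendsto_of_tendsto' hK hzero hbound
  norm_num at this

lemma inter_s12 (hpq : ∀ n, p n < q n) (hK : DeferredDensity p q K 1)
    (hK' : DeferredDensity p q K' 1) : DeferredDensity p q (K ∩ K') 1 := by
  have hlower : Tendsto (fun n => deferredRatio p q K n + deferredRatio p q K' n - 1)
      atTop (𝓝 1) := by
    simpa using (hK.add hK').sub_const 1
  refine tendsto_of_tendsto_of_tendsto_of_le_of_le hlower tendsto_const_nhds (fun n => ?_)
    (fun n => deferredRatio_le_one (hpq n) _)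
  linarith [deferredRatio_add_deferredRatio_le (hpq n) K K']

end DeferredDensity

lemma AntitoneOn.le_of_isGLB_image_of_frequently_le {α : Type*} [Preorder α] {z : ℕ → α}
    {K : Set ℕ} {b c : α} (hz : AntitoneOn z K) (hc : IsGLB (z '' K) c)
    (hb : ∃ᶠ j in atTop, j ∈ K ∧ b ≤ z j) : b ≤ c := by
  refine hc.2 ?_
  rintro _ ⟨k, hk, rfl⟩
  obtain ⟨j, ⟨hjK, hbj⟩, hkj⟩ := (hb.and_eventually (eventually_ge_atTop k)).exists
  exact hbj.trans (hz hk hjK hkj)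

section LatticeOrderedGroup

variable {α : Type*} [Lattice α] [AddCommGroup α] [AddLeftMono α]

lemma Antitone.isGLB_range_of_frequently_abs_sub_le {x z : ℕ → α} {K : Set ℕ} {a : α}
    (hx : Antitone x) (hz : AntitoneOn z K) (hz0 : IsGLB (z '' K) 0)
    (hxz : ∃ᶠ j in atTop, j ∈ K ∧ |x j - a| ≤ z j) : IsGLB (Set.range x) a := by
  constructor
  · rintro _ ⟨n, rfl⟩
    refine sub_nonpos.1 (hz.le_of_isGLB_image_of_frequently_le hz0 ?_)
    refine (hxz.and_eventually (eventually_ge_atTop n)).mono fun j ⟨⟨hjK, hj⟩, hnj⟩ => ⟨hjK, ?_⟩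
    calc a - x n ≤ a - x j := sub_le_sub_left (hx hnj) a
      _ ≤ |x j - a| := abs_sub_comm (x j) a ▸ le_abs_self _
      _ ≤ z j := hj
  · intro b hb
    refine sub_nonpos.1 (hz.le_of_isGLB_image_of_frequently_le hz0 ?_)
    refine hxz.mono fun j ⟨hjK, hj⟩ => ⟨hjK, ?_⟩
    calc b - a ≤ x j - a := sub_le_sub_right (hb ⟨j, rfl⟩) a
      _ ≤ |x j - a| := le_abs_self _
      _ ≤ z j := hj

lemma isGLB_range_sub {x : ℕ → α} {a : α} (ha : IsGLB (Set.range x) a) :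
    IsGLB (Set.range fun n => x n - a) 0 := by
  have := (OrderIso.addRight (-a)).isGLB_image'.2 ha
  simpa [← Set.range_comp, Function.comp_def, ← sub_eq_add_neg] using this

lemma orderConv_of_antitone_of_isGLB {x : ℕ → α} {a : α} (hx : Antitone x)
    (ha : IsGLB (Set.range x) a) : OrderConv x a :=
  ⟨fun n => x n - a, fun _ _ h => sub_le_sub_right (hx h) a, isGLB_range_sub ha,
    fun n => (abs_of_nonneg (sub_nonneg.2 (ha.1 ⟨n, rfl⟩))).le⟩

end LatticeOrderedGroup

theorem stmt12 (p q : ℕ → ℕ) (hpq : DeferredProperty p q) (x : ℕ → E) (a : E)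
    (hdec : ∀ m n, m ≤ n → x n ≤ x m) (hx : DStatOrderConv p q x a) :
    IsGLB (Set.range x) a ∧ OrderConv x a := by
  obtain ⟨z, ⟨K, -, hKd, hz, hz0⟩, K', -, hK'd, hxz⟩ := hx
  have hJ : (K ∩ K').Infinite := (hKd.inter_s12 hpq.1 hK'd).infinite_s12 hpq
  have hfreq : ∃ᶠ j in atTop, j ∈ K ∧ |x j - a| ≤ z j :=
    (Nat.frequently_atTop_iff_infinite.2 hJ).mono fun j hj => ⟨hj.1, hxz j hj.2⟩
  have hglb : IsGLB (Set.range x) a :=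
    Antitone.isGLB_range_of_frequently_abs_sub_le hdec hz hz0 hfreq
  exact ⟨hglb, orderConv_of_antitone_of_isGLB hdec hglb⟩
end
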